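/- Let p be a homogeneous element of ℤ⟨A,D⟩ of degree n. If p = f(c,d) + A·g(c,d) = f'(c,d) + A·g'(c,d) with f, f' homogeneous cd-polynomials of degree n and g, g' homogeneous cd-polynomials of degree n−1, then f = f' and g = g'. -/

import Mathlib

noncomputable section

abbrev R : Type := MonoidAlgebra ℤ (FreeMonoid Bool)

def A : R := MonoidAlgebra.single (FreeMonoid.of false) 1
def D : R := MonoidAlgebra.single (FreeMonoid.of true) 1
def c : R := A + D
def d : R := A * D + D * A

/-- `p` is homogeneous of degree `n`: every word in its support has length `n`. -/
def Homog (n : ℕ) (p : R) : Prop := ∀ w ∈ p.coeff.support, FreeMonoid.length w = n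

/-! From `f - f' = A (g' - g)` and its image `f - f' = D (g' - g)` under the swap `A ↔ D`,
which fixes cd-polynomials, we get `(A - D)(g' - g) = 0`. Left multiplication by distinct
letters in a free monoid algebra has disjoint supports, so `g = g'`, and then `f = f'`. -/

section FreeMonoidAlgebra

variable {k α : Type*} [Semiring k]

theorem MonoidAlgebra.coeff_single_of_mul_of_mul (a : α) (h : MonoidAlgebra k (FreeMonoid α))
    (w : FreeMonoid α) :
    (MonoidAlgebra.single (FreeMonoid.of a) 1 * h).coeff (FreeMonoid.of a * w) = h.coeff w := by
  simp [MonoidAlgebra.coeff_single_mul_eq_mul_coeff (r := (1 : k)) (x := h) w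
    (fun _ _ => mul_right_inj _)]

theorem MonoidAlgebra.coeff_single_of_mul_of_ne {a b : α} (hab : a ≠ b)
    (h : MonoidAlgebra k (FreeMonoid α)) (w : FreeMonoid α) :
    (MonoidAlgebra.single (FreeMonoid.of b) 1 * h).coeff (FreeMonoid.of a * w) = 0 := by
  refine MonoidAlgebra.coeff_single_mul_of_forall_mul_ne _ _ fun e he => hab ?_
  simpa [FreeMonoid.toList_of] using congrArg (List.head? ∘ FreeMonoid.toList) he.symm

theorem MonoidAlgebra.eq_zero_of_single_of_mul_eq {a b : α} (hab : a ≠ b)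
    {h : MonoidAlgebra k (FreeMonoid α)}
    (heq : MonoidAlgebra.single (FreeMonoid.of a) 1 * h =
      MonoidAlgebra.single (FreeMonoid.of b) 1 * h) : h = 0 := by
  ext w
  simpa [heq, coeff_single_of_mul_of_ne hab] using
    (coeff_single_of_mul_of_mul a h w).symm

end FreeMonoidAlgebra

def swapAD : R →+* R := MonoidAlgebra.mapDomainRingHom ℤ (FreeMonoid.map Bool.not)

theorem swapAD_single (w : FreeMonoid Bool) (r : ℤ) :
    swapAD (MonoidAlgebra.single w r) = MonoidAlgebra.single (FreeMonoid.map Bool.not w) r := by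
  simp [swapAD, MonoidAlgebra.mapDomainRingHom]

theorem swapAD_A : swapAD A = D := by
  simp [swapAD_single, A, D, FreeMonoid.map_of]

theorem swapAD_D : swapAD D = A := by
  simp [swapAD_single, A, D, FreeMonoid.map_of]

theorem swapAD_c : swapAD c = c := by
  rw [c, map_add, swapAD_A, swapAD_D, add_comm]

theorem swapAD_d : swapAD d = d := by
  rw [d, map_add, map_mul, map_mul, swapAD_A, swapAD_D, add_comm]

theorem swapAD_eq_self_of_mem_closure {x : R} (hx : x ∈ Subring.closure {c, d}) :
    swapAD x = x := by
  induction hx using Subring.closure_induction with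
  | mem y hy => rcases hy with rfl | rfl; exacts [swapAD_c, swapAD_d]
  | one => exact map_one _
  | zero => exact map_zero _
  | add _ _ _ _ h₁ h₂ => rw [map_add, h₁, h₂]
  | neg _ _ h => rw [map_neg, h]
  | mul _ _ _ _ h₁ h₂ => rw [map_mul, h₁, h₂]

theorem cd_plus_Acd_unique_general (f f' g g' : R)
    (hf : f ∈ Subring.closure {c, d}) (hf' : f' ∈ Subring.closure {c, d})
    (hg : g ∈ Subring.closure {c, d}) (hg' : g' ∈ Subring.closure {c, d})
    (heq : f + A * g = f' + A * g') :
    f = f' ∧ g = g' := by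
  have hA : f - f' = A * (g' - g) := by
    rw [mul_sub, sub_eq_sub_iff_add_eq_add, heq, add_comm]
  have hD : f - f' = D * (g' - g) := by
    simpa only [map_sub, map_mul, swapAD_A, swapAD_eq_self_of_mem_closure, hf, hf', hg, hg']
      using congrArg swapAD hA
  have hg_eq : g' - g = 0 :=
    MonoidAlgebra.eq_zero_of_single_of_mul_eq Bool.false_ne_true (hA.symm.trans hD)
  rw [hg_eq, mul_zero, sub_eq_zero] at hA
  exact ⟨hA, (sub_eq_zero.1 hg_eq).symm⟩

/-- If `p = f + A·g = f' + A·g'` where `f, f'` are homogeneous cd-polynomials of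
degree `n` and `g, g'` are homogeneous cd-polynomials of degree `n - 1`, then
`f = f'` and `g = g'`. -/
theorem cd_plus_Acd_unique (n : ℕ) (f f' g g' : R)
    (hf : f ∈ Subring.closure {c, d}) (hf' : f' ∈ Subring.closure {c, d})
    (hg : g ∈ Subring.closure {c, d}) (hg' : g' ∈ Subring.closure {c, d})
    (hfn : Homog n f) (hf'n : Homog n f')
    (hgn : Homog (n - 1) g) (hg'n : Homog (n - 1) g')
    (heq : f + A * g = f' + A * g') :
    f = f' ∧ g = g' :=
  cd_plus_Acd_unique_general f f' g g' hf hf' hg hg' heq
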